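/- Let $\mathcal{Z}_1 = \langle c_1, G_1, A_1, b_1 \rangle$ and $\mathcal{Z}_2 = \langle c_2, G_2, A_2, b_2 \rangle$ be constrained zonotopes in $\mathbb{R}^n$, with $G_1 \in \mathbb{R}^{n\times n_{g_1}}$, $G_2 \in \mathbb{R}^{n\times n_{g_2}}$. Then their intersection satisfies $\mathcal{Z}_1 \cap \mathcal{Z}_2 = \Big\langle c_1,\ [G_1\ 0],\ \begin{bmatrix} A_1 & 0 \\ 0 & A_2 \\ G_1 & -G_2 \end{bmatrix},\ \begin{bmatrix} b_1 \\ b_2 \\ c_2 - c_1 \end{bmatrix} \Big\rangle$, where $[G_1\ 0] \in \mathbb{R}^{n\times(n_{g_1}+n_{g_2})}$; that is, $x \in \mathcal{Z}_1 \cap \mathcal{Z}_2$ if and only if there exists $\beta = (\beta^{(1)}, \beta^{(2)}) \in \mathbb{R}^{n_{g_1}+n_{g_2}}$ with $\|\beta\|_\infty \le 1$, $x = c_1 + G_1\beta^{(1)}$, $A_1\beta^{(1)} = b_1$, $A_2\beta^{(2)} = b_2$, and $G_1\beta^{(1)} - G_2\beta^{(2)} = c_2 - c_1$. -/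

import Mathlib

/-- The constrained zonotope `⟨c, G, A, b⟩` with center `c`, generator matrix `G`,
and constraints `Aβ = b`, over arbitrary finite generator index type `ι` and
constraint index type `κ`. -/
def consZonotope {n : ℕ} {ι κ : Type*} [Fintype ι] [Fintype κ] (c : Fin n → ℝ)
    (G : Matrix (Fin n) ι ℝ) (A : Matrix κ ι ℝ) (b : κ → ℝ) : Set (Fin n → ℝ) :=
  {x | ∃ β : ι → ℝ, ‖β‖ ≤ 1 ∧ A.mulVec β = b ∧ x = c + G.mulVec β}

/-- The intersection of two constrained zonotopes `⟨c₁,G₁,A₁,b₁⟩` and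
`⟨c₂,G₂,A₂,b₂⟩` is the constrained zonotope with center `c₁`, generator matrix
`[G₁ 0]`, constraint matrix `[[A₁,0],[0,A₂],[G₁,-G₂]]` and constraint vector
`(b₁, b₂, c₂ - c₁)`. -/
theorem consZonotope_inter {n ng₁ ng₂ nc₁ nc₂ : ℕ}
    (c₁ c₂ : Fin n → ℝ)
    (G₁ : Matrix (Fin n) (Fin ng₁) ℝ) (G₂ : Matrix (Fin n) (Fin ng₂) ℝ)
    (A₁ : Matrix (Fin nc₁) (Fin ng₁) ℝ) (A₂ : Matrix (Fin nc₂) (Fin ng₂) ℝ)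
    (b₁ : Fin nc₁ → ℝ) (b₂ : Fin nc₂ → ℝ) :
    consZonotope c₁ G₁ A₁ b₁ ∩ consZonotope c₂ G₂ A₂ b₂ =
      consZonotope c₁
        (Matrix.fromCols G₁ (0 : Matrix (Fin n) (Fin ng₂) ℝ))
        (Matrix.fromRows (Matrix.fromBlocks A₁ 0 0 A₂)
          (Matrix.fromCols G₁ (-G₂)))
        (Sum.elim (Sum.elim b₁ b₂) (c₂ - c₁)) := by
  ext x
  simp only [Set.mem_inter_iff, consZonotope, Set.mem_setOf_eq]
  constructor
  · rintro ⟨⟨β₁, hβ₁, hA₁, hx₁⟩, ⟨β₂, hβ₂, hA₂, hx₂⟩⟩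
    refine ⟨Sum.elim β₁ β₂, ?_, ?_, ?_⟩
    · rw [pi_norm_le_iff_of_nonneg zero_le_one] at hβ₁ hβ₂ ⊢
      rintro (i | i)
      · exact hβ₁ i
      · exact hβ₂ i
    · rw [Matrix.fromRows_mulVec, Matrix.fromBlocks_mulVec,
        Matrix.fromCols_mulVec_sumElim]
      simp only [Sum.elim_comp_inl, Sum.elim_comp_inr, Matrix.zero_mulVec, add_zero,
        zero_add, hA₁, hA₂]
      have hG : G₁.mulVec β₁ + (-G₂).mulVec β₂ = c₂ - c₁ := by
        ext i
        have e1 := congrFun hx₁ i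
        have e2 := congrFun hx₂ i
        simp only [Pi.add_apply, Pi.sub_apply, Matrix.neg_mulVec, Pi.neg_apply] at *
        linarith
      rw [hG]
    · rw [Matrix.fromCols_mulVec_sumElim]
      simpa using hx₁
  · rintro ⟨β, hβ, hA, hx⟩
    obtain ⟨β₁, β₂, rfl⟩ : ∃ β₁ β₂, β = Sum.elim β₁ β₂ :=
      ⟨β ∘ Sum.inl, β ∘ Sum.inr, (Sum.elim_comp_inl_inr β).symm⟩
    rw [Matrix.fromRows_mulVec, Matrix.fromBlocks_mulVec,
      Matrix.fromCols_mulVec_sumElim] at hA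
    simp only [Sum.elim_comp_inl, Sum.elim_comp_inr, Matrix.zero_mulVec, add_zero,
      zero_add] at hA
    have hA' := congrFun hA
    have h1 : A₁.mulVec β₁ = b₁ := by
      ext i; simpa [Matrix.zero_mulVec] using hA' (Sum.inl (Sum.inl i))
    have h2 : A₂.mulVec β₂ = b₂ := by
      ext i; simpa [Matrix.zero_mulVec] using hA' (Sum.inl (Sum.inr i))
    have h3 : ∀ i, G₁.mulVec β₁ i - G₂.mulVec β₂ i = c₂ i - c₁ i := by
      intro i
      have := hA' (Sum.inr i)
      simpa [Matrix.neg_mulVec, sub_eq_add_neg] using this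
    rw [Matrix.fromCols_mulVec_sumElim] at hx
    have hb : ∀ (s : (Fin ng₁ ⊕ Fin ng₂)), ‖Sum.elim β₁ β₂ s‖ ≤ 1 :=
      (pi_norm_le_iff_of_nonneg zero_le_one).mp hβ
    refine ⟨⟨β₁, ?_, h1, by simpa using hx⟩, ⟨β₂, ?_, h2, ?_⟩⟩
    · rw [pi_norm_le_iff_of_nonneg zero_le_one]
      exact fun i => hb (Sum.inl i)
    · rw [pi_norm_le_iff_of_nonneg zero_le_one]
      exact fun i => hb (Sum.inr i)
    · ext i
      have := h3 i
      simp only [Matrix.zero_mulVec, add_zero] at hx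
      have hxi : x i = c₁ i + G₁.mulVec β₁ i := congrFun hx i
      simp only [Pi.add_apply]
      linarith
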